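/- Let (X_m, T_m), m ∈ ℕ, be compact dynamical systems and suppose there is an equivariant continuous map f : ∏_{m=1}^∞ X_m → 𝒴. Then there exist M ∈ ℕ and an equivariant continuous map g : X_1 × ⋯ × X_M → 𝒵, where 𝒴 = {(x_n) ∈ (ℝ/2ℤ)^ℤ : max(ρ(x_n,x_{n+1}), ρ(x_{n+1},x_{n+2})) = 1 ∀n} and 𝒵 = {(x_n) ∈ (ℝ/2ℤ)^ℤ : max(ρ(x_n,x_{n+1}), ρ(x_{n+1},x_{n+2})) ≥ 1/2 ∀n}, both with the shift. -/

import Mathlib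

/-- The subsystem `𝒴 ⊂ (ℝ/2ℤ)^ℤ`: sequences such that among any two consecutive steps,
one has distance exactly `1` (the diameter of `ℝ/2ℤ`). -/
def Yspace : Set (ℤ → AddCircle (2:ℝ)) :=
  {x | ∀ n : ℤ, max (dist (x n) (x (n + 1))) (dist (x (n + 1)) (x (n + 2))) = 1}

/-- The subsystem `𝒵 ⊂ (ℝ/2ℤ)^ℤ`: sequences such that among any two consecutive steps,
one has distance at least `1/2`. -/
def Zspace : Set (ℤ → AddCircle (2:ℝ)) :=
  {x | ∀ n : ℤ, (1:ℝ)/2 ≤ max (dist (x n) (x (n + 1))) (dist (x (n + 1)) (x (n + 2)))}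

/-!
By compactness, `f · 0` is determined up to `1/4` by the coordinates below some `M`. Pad a point
of `X 0 × ⋯ × X (M-1)` with a fixed tail `p` and read `f · 0` along the orbit of the finite
shift `S`: `g x n = f (pad (Sⁿ x)) 0`. Padding commutes with the shifts up to changing the tail,
so coordinates `n, n+1, n+2` of `g x` are within `1/4` of coordinates `0, 1, 2` of
`f (pad (Sⁿ x))`, and a step of length `1` in the latter leaves one of length at least `1/2`
in `g x`.
-/

open Set

theorem Continuous.exists_finset_dist_lt_of_forall_mem_eq {ι α : Type*} {X : ι → Type*}
    [∀ i, TopologicalSpace (X i)] [CompactSpace (∀ i, X i)] [PseudoMetricSpace α]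
    {φ : (∀ i, X i) → α} (hφ : Continuous φ) {ε : ℝ} (hε : 0 < ε) :
    ∃ J : Finset ι, ∀ a b : ∀ i, X i, (∀ i ∈ J, a i = b i) → dist (φ a) (φ b) < ε := by
  classical
  -- finitely many cylinders on which `φ` varies by less than `ε` cover the product
  have hball : ∀ x, IsOpen (φ ⁻¹' Metric.ball (φ x) (ε / 2)) := fun x =>
    Metric.isOpen_ball.preimage hφ
  choose I u hu hsub using fun x => isOpen_pi_iff.1 (hball x) x (by simpa using half_pos hε)
  obtain ⟨t, ht⟩ := isCompact_univ.elim_finite_subcover (fun x => (I x : Set ι).pi (u x))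
    (fun x => isOpen_set_pi (I x).finite_toSet fun i hi => (hu x i hi).1)
    (fun x _ => mem_iUnion.2 ⟨x, fun i hi => (hu x i hi).2⟩)
  refine ⟨t.biUnion I, fun a b hab => ?_⟩
  obtain ⟨x, hxt, hax⟩ := mem_iUnion₂.1 (ht (mem_univ a))
  have hbx : b ∈ (I x : Set ι).pi (u x) := fun i hi =>
    hab i (Finset.mem_biUnion.2 ⟨x, hxt, hi⟩) ▸ hax i hi
  calc dist (φ a) (φ b) ≤ dist (φ a) (φ x) + dist (φ b) (φ x) := dist_triangle_right _ _ _
    _ < ε / 2 + ε / 2 := add_lt_add (hsub x hax) (hsub x hbx)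
    _ = ε := add_halves ε

theorem max_dist_lt_max_dist_add {α : Type*} [PseudoMetricSpace α] {a₀ a₁ a₂ b₀ b₁ b₂ : α}
    {ε : ℝ} (h₀ : dist a₀ b₀ < ε) (h₁ : dist a₁ b₁ < ε) (h₂ : dist a₂ b₂ < ε) :
    max (dist a₀ a₁) (dist a₁ a₂) < max (dist b₀ b₁) (dist b₁ b₂) + 2 * ε := by
  refine max_lt ?_ ?_
  · linarith [dist_triangle4 a₀ b₀ b₁ a₁, dist_comm b₁ a₁, le_max_left (dist b₀ b₁) (dist b₁ b₂)]
  · linarith [dist_triangle4 a₁ b₁ b₂ a₂, dist_comm b₂ a₂, le_max_right (dist b₀ b₁) (dist b₁ b₂)]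

section orbitSeq

variable {Z A : Type*} [TopologicalSpace Z] (S : Z ≃ₜ Z) (φ : Z → A)

def orbitSeq (z : Z) (n : ℤ) : A := φ ((S ^ n) z)

theorem continuous_orbitSeq [TopologicalSpace A] (hφ : Continuous φ) :
    Continuous (orbitSeq S φ) :=
  continuous_pi fun n => hφ.comp (S ^ n).continuous

theorem orbitSeq_apply_self (z : Z) : orbitSeq S φ (S z) = fun n => orbitSeq S φ z (n + 1) := by
  funext n
  rw [orbitSeq, orbitSeq, zpow_add_one, Homeomorph.mul_apply]

theorem orbitSeq_add_natCast (z : Z) (n : ℤ) (k : ℕ) :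
    orbitSeq S φ z (n + k) = φ ((S ^ k) ((S ^ n) z)) := by
  rw [orbitSeq, add_comm, zpow_add, zpow_natCast, Homeomorph.mul_apply]

end orbitSeq

section finPad

variable {X : ℕ → Type*}

def finPad (p : ∀ m, X m) {M : ℕ} (x : ∀ m : Fin M, X m) : ∀ m, X m :=
  fun m => if h : m < M then x ⟨m, h⟩ else p m

theorem finPad_apply_of_lt (p : ∀ m, X m) {M : ℕ} (x : ∀ m : Fin M, X m) {m : ℕ} (h : m < M) :
    finPad p x m = x ⟨m, h⟩ :=
  dif_pos h

theorem continuous_finPad [∀ m, TopologicalSpace (X m)] (p : ∀ m, X m) (M : ℕ) :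
    Continuous (finPad p : (∀ m : Fin M, X m) → ∀ m, X m) := by
  refine continuous_pi fun m => ?_
  by_cases h : m < M
  · simpa [finPad, h] using continuous_apply (⟨m, h⟩ : Fin M)
  · simpa [finPad, h] using continuous_const

theorem piCongrRight_pow_finPad [∀ m, TopologicalSpace (X m)] (T : ∀ m, X m ≃ₜ X m)
    (p : ∀ m, X m) {M : ℕ} (x : ∀ m : Fin M, X m) (k : ℕ) :
    (Homeomorph.piCongrRight T ^ k) (finPad p x) =
      finPad ((Homeomorph.piCongrRight T ^ k) p)
        ((Homeomorph.piCongrRight (fun m : Fin M => T m) ^ k) x) := by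
  induction k with
  | zero => rfl
  | succ k ih =>
    simp only [pow_succ', Homeomorph.mul_apply, ih]
    funext m
    by_cases h : m < M <;> simp [finPad, h]

end finPad

section shift

variable {X : ℕ → Type*} [∀ m, TopologicalSpace (X m)] {T : ∀ m, X m ≃ₜ X m} {A : Type*}
  {f : (∀ m, X m) → ℤ → A}

theorem apply_piCongrRight_pow (hequiv : ∀ x, f (fun m => T m (x m)) = fun n => f x (n + 1))
    (y : ∀ m, X m) (k : ℕ) : f ((Homeomorph.piCongrRight T ^ k) y) 0 = f y k := by
  induction k generalizing y with
  | zero => rfl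
  | succ k ih =>
    rw [pow_succ, Homeomorph.mul_apply, ih, Nat.cast_succ]
    exact congrFun (hequiv y) k

theorem dist_apply_finPad_lt [PseudoMetricSpace A]
    (hequiv : ∀ x, f (fun m => T m (x m)) = fun n => f x (n + 1)) {M : ℕ} {ε : ℝ}
    (hM : ∀ a b : ∀ m, X m, (∀ m < M, a m = b m) → dist (f a 0) (f b 0) < ε)
    (p : ∀ m, X m) (x : ∀ m : Fin M, X m) (k : ℕ) :
    dist (f (finPad p x) k)
      (f (finPad p ((Homeomorph.piCongrRight (fun m : Fin M => T m) ^ k) x)) 0) < ε := by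
  rw [← apply_piCongrRight_pow hequiv, piCongrRight_pow_finPad]
  exact hM _ _ fun m hm => (finPad_apply_of_lt _ _ hm).trans (finPad_apply_of_lt _ _ hm).symm

end shift

theorem finite_product_map_to_Z_general (X : ℕ → Type*) [∀ m, TopologicalSpace (X m)]
    [∀ m, CompactSpace (X m)]
    (T : ∀ m, X m ≃ₜ X m)
    (f : (∀ m, X m) → (ℤ → AddCircle (2:ℝ))) (hf : Continuous f)
    (hfY : ∀ x, f x ∈ Yspace)
    (hequiv : ∀ x : ∀ m, X m, f (fun m => T m (x m)) = fun n => f x (n + 1)) :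
    ∃ (M : ℕ) (g : (∀ m : Fin M, X m) → (ℤ → AddCircle (2:ℝ))),
      Continuous g ∧ (∀ x, g x ∈ Zspace) ∧
      ∀ x : ∀ m : Fin M, X m, g (fun m => T m (x m)) = fun n => g x (n + 1) := by
  rcases isEmpty_or_nonempty (∀ m, X m) with hX | ⟨⟨p⟩⟩
  · obtain ⟨m, hm⟩ := isEmpty_pi.1 hX
    exact ⟨m + 1, fun _ _ => 0, continuous_const, fun x => hm.elim (x (Fin.last m)),
      fun x => hm.elim (x (Fin.last m))⟩
  obtain ⟨J, hJ⟩ := ((continuous_apply 0).comp hf).exists_finset_dist_lt_of_forall_mem_eq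
    (by norm_num : (0 : ℝ) < 1 / 4)
  obtain ⟨M, hJM⟩ := J.exists_nat_subset_range
  have hM : ∀ a b : ∀ m, X m, (∀ m < M, a m = b m) → dist (f a 0) (f b 0) < 1 / 4 :=
    fun a b hab => hJ a b fun m hm => hab m (Finset.mem_range.1 (hJM hm))
  set S := Homeomorph.piCongrRight (fun m : Fin M => T m)
  set g := orbitSeq S fun x => f (finPad p x) 0 with hg
  refine ⟨M, g, continuous_orbitSeq S _ ((continuous_apply 0).comp (hf.comp
    (continuous_finPad p M))), fun x n => ?_, orbitSeq_apply_self S _⟩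
  have hclose (k : ℕ) : dist (f (finPad p ((S ^ n) x)) k) (g x (n + k)) < 1 / 4 := by
    rw [hg, orbitSeq_add_natCast]
    exact dist_apply_finPad_lt hequiv hM p _ k
  have hY := hfY (finPad p ((S ^ n) x)) 0
  have := max_dist_lt_max_dist_add (hclose 0) (hclose 1) (hclose 2)
  simp only [Nat.cast_zero, Nat.cast_one, Nat.cast_ofNat, add_zero, zero_add] at hY this
  linarith

/-- **From an infinite product to a finite product.** If a countable product of compact
dynamical systems admits an equivariant continuous map to `𝒴`, then some finite
subproduct admits an equivariant continuous map to `𝒵`. -/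
theorem finite_product_map_to_Z (X : ℕ → Type*) [∀ m, TopologicalSpace (X m)]
    [∀ m, CompactSpace (X m)] [∀ m, TopologicalSpace.MetrizableSpace (X m)]
    (T : ∀ m, X m ≃ₜ X m)
    (f : (∀ m, X m) → (ℤ → AddCircle (2:ℝ))) (hf : Continuous f)
    (hfY : ∀ x, f x ∈ Yspace)
    (hequiv : ∀ x : ∀ m, X m, f (fun m => T m (x m)) = fun n => f x (n + 1)) :
    ∃ (M : ℕ) (g : (∀ m : Fin M, X m) → (ℤ → AddCircle (2:ℝ))),
      Continuous g ∧ (∀ x, g x ∈ Zspace) ∧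
      ∀ x : ∀ m : Fin M, X m, g (fun m => T m (x m)) = fun n => g x (n + 1) :=
  finite_product_map_to_Z_general X T f hf hfY hequiv
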